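/- arXiv:1111.5029 — 4 statements merged into one kernel-verified Lean document; each statement's English description precedes it below -/
import Mathlib

section
/- Let S : M_d(ℝ) → M_d(ℝ) be defined by S(G) = (Gᵀ·G)/(1 + Tr(Gᵀ·G)). Then for every G ∈ M_d(ℝ) with G ≠ 0 and every direction H ∈ M_d(ℝ), the Fréchet derivative satisfies ‖DS(G)[H]‖ ≤ (2(1 + √d)/‖G‖)·‖H‖. -/
open Matrix

-- Matrices are regarded as a normed space with the Frobenius norm.
attribute [local instance] Matrix.frobeniusNormedAddCommGroup Matrix.frobeniusNormedSpace

/-- The PSM strain measure `S(G) = (Gᵀ·G)/(1 + Tr(Gᵀ·G))`. -/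
noncomputable def psmStrain {d : ℕ} (G : Matrix (Fin d) (Fin d) ℝ) :
    Matrix (Fin d) (Fin d) ℝ :=
  (1 + (Gᵀ * G).trace)⁻¹ • (Gᵀ * G)

/-!
With `c = 1 + ‖G‖² = 1 + Tr(GᵀG)`, the quotient rule gives
`DS(G)[H] = (GᵀH + HᵀG)/c - ((Tr(GᵀH) + Tr(HᵀG))/c²) • GᵀG`.
Both `‖GᵀH + HᵀG‖` and `|Tr(GᵀH) + Tr(HᵀG)|` are at most `2‖G‖‖H‖` (submultiplicativity and
Cauchy–Schwarz for the Frobenius inner product `Tr(AᵀB)`), and `‖GᵀG‖ ≤ ‖G‖² ≤ c`, so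
`‖DS(G)[H]‖ ≤ 4‖G‖‖H‖/c ≤ 4‖H‖/‖G‖`. Finally `4 ≤ 2(1 + √d)` because `G ≠ 0` forces `d ≥ 1`.
-/

namespace Matrix

variable {m n k : Type*} [Fintype m] [Fintype n] [Fintype k]

theorem frobenius_norm_sq_eq_sum (A : Matrix m n ℝ) : ‖A‖ ^ 2 = ∑ i, ∑ j, A i j ^ 2 := by
  rw [frobenius_norm_def, ← Real.rpow_natCast, ← Real.rpow_mul (by positivity)]
  norm_num

theorem trace_transpose_mul_eq_sum (A B : Matrix m n ℝ) :
    (Aᵀ * B).trace = ∑ i, ∑ j, A i j * B i j := by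
  simp only [trace, diag, mul_apply, transpose_apply]
  exact Finset.sum_comm

theorem trace_transpose_mul_self_eq_norm_sq (A : Matrix m n ℝ) : (Aᵀ * A).trace = ‖A‖ ^ 2 := by
  simp only [trace_transpose_mul_eq_sum, frobenius_norm_sq_eq_sum, ← sq]

theorem abs_trace_transpose_mul_le (A B : Matrix m n ℝ) : |(Aᵀ * B).trace| ≤ ‖A‖ * ‖B‖ := by
  refine abs_le_of_sq_le_sq ?_ (by positivity)
  rw [mul_pow, frobenius_norm_sq_eq_sum, frobenius_norm_sq_eq_sum, trace_transpose_mul_eq_sum]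
  simp only [← Fintype.sum_prod_type']
  exact Finset.sum_mul_sq_le_sq_mul_sq _ _ _

theorem isBoundedBilinearMap_transpose_mul :
    IsBoundedBilinearMap ℝ (fun p : Matrix m n ℝ × Matrix m k ℝ => p.1ᵀ * p.2) where
  add_left A A' B := by rw [transpose_add, Matrix.add_mul]
  smul_left c A B := by rw [transpose_smul, Matrix.smul_mul]
  add_right A B B' := Matrix.mul_add _ _ _
  smul_right c A B := Matrix.mul_smul _ c B
  bound := ⟨1, one_pos, fun A B => by
    simpa [frobenius_norm_transpose] using frobenius_norm_mul Aᵀ B⟩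

theorem isBoundedBilinearMap_trace_transpose_mul :
    IsBoundedBilinearMap ℝ (fun p : Matrix m n ℝ × Matrix m n ℝ => (p.1ᵀ * p.2).trace) where
  add_left A A' B := by rw [transpose_add, Matrix.add_mul, trace_add]
  smul_left c A B := by rw [transpose_smul, Matrix.smul_mul, trace_smul]
  add_right A B B' := by rw [Matrix.mul_add, trace_add]
  smul_right c A B := by rw [Matrix.mul_smul, trace_smul]
  bound := ⟨1, one_pos, fun A B => by simpa using abs_trace_transpose_mul_le A B⟩

theorem norm_transpose_mul_add_transpose_mul_le (A B : Matrix m n ℝ) :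
    ‖Aᵀ * B + Bᵀ * A‖ ≤ 2 * (‖A‖ * ‖B‖) :=
  calc ‖Aᵀ * B + Bᵀ * A‖ ≤ ‖Aᵀ‖ * ‖B‖ + ‖Bᵀ‖ * ‖A‖ :=
        (norm_add_le _ _).trans (add_le_add (frobenius_norm_mul _ _) (frobenius_norm_mul _ _))
    _ = 2 * (‖A‖ * ‖B‖) := by rw [frobenius_norm_transpose, frobenius_norm_transpose]; ring

end Matrix

theorem fderiv_psmStrain_apply {d : ℕ} (G H : Matrix (Fin d) (Fin d) ℝ) :
    fderiv ℝ psmStrain G H = (1 + ‖G‖ ^ 2)⁻¹ • (Gᵀ * H + Hᵀ * G)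
      - (((Gᵀ * H).trace + (Hᵀ * G).trace) / (1 + ‖G‖ ^ 2) ^ 2) • (Gᵀ * G) := by
  have hdiag := (hasFDerivAt_id (𝕜 := ℝ) G).prodMk (hasFDerivAt_id G)
  have hq := (isBoundedBilinearMap_transpose_mul.hasFDerivAt (G, G)).comp
    (f := fun A => (A, A)) G hdiag
  have hc := ((isBoundedBilinearMap_trace_transpose_mul.hasFDerivAt (G, G)).comp
    (f := fun A => (A, A)) G hdiag).const_add 1
  have hc0 : 1 + (Gᵀ * G).trace ≠ 0 := by rw [trace_transpose_mul_self_eq_norm_sq]; positivity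
  rw [HasFDerivAt.fderiv (f := psmStrain) (((hasFDerivAt_inv hc0).comp G hc).smul hq)]
  -- Evaluate at `H` by unfolding: `simp` fails here, as the bilinear derivatives carry the
  -- Frobenius instances and `id` the generic matrix ones.
  change (1 + (Gᵀ * G).trace)⁻¹ • (Gᵀ * H + Hᵀ * G)
      + (((Gᵀ * H).trace + (Hᵀ * G).trace) * -((1 + (Gᵀ * G).trace) ^ 2)⁻¹) • (Gᵀ * G) = _
  rw [trace_transpose_mul_self_eq_norm_sq]
  module

theorem norm_fderiv_psmStrain_apply_le {d : ℕ} (G H : Matrix (Fin d) (Fin d) ℝ) :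
    ‖fderiv ℝ psmStrain G H‖ ≤ 4 * ‖G‖ / (1 + ‖G‖ ^ 2) * ‖H‖ := by
  rw [fderiv_psmStrain_apply]
  set c := 1 + ‖G‖ ^ 2
  have hc : 0 < c := by positivity
  have hGc : ‖G‖ ^ 2 / c ≤ 1 := (div_le_one hc).mpr (by simp [c])
  have htr : |(Gᵀ * H).trace + (Hᵀ * G).trace| ≤ 2 * (‖G‖ * ‖H‖) := by
    have := abs_trace_transpose_mul_le G H
    have := abs_trace_transpose_mul_le H G
    linarith [abs_add_le (Gᵀ * H).trace (Hᵀ * G).trace]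
  have hGG : ‖Gᵀ * G‖ ≤ ‖G‖ ^ 2 := by simpa [sq] using frobenius_norm_mul Gᵀ G
  calc _ ≤ c⁻¹ * ‖Gᵀ * H + Hᵀ * G‖
          + |(Gᵀ * H).trace + (Hᵀ * G).trace| / c ^ 2 * ‖Gᵀ * G‖ := by
        refine (norm_sub_le _ _).trans_eq ?_
        rw [norm_smul, norm_smul, Real.norm_eq_abs, Real.norm_eq_abs, abs_div,
          abs_of_pos (inv_pos.mpr hc), abs_of_pos (by positivity : 0 < c ^ 2)]
    _ ≤ c⁻¹ * (2 * (‖G‖ * ‖H‖)) + 2 * (‖G‖ * ‖H‖) / c ^ 2 * ‖G‖ ^ 2 := by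
        gcongr
        exact norm_transpose_mul_add_transpose_mul_le G H
    _ = 2 * ‖G‖ / c * ‖H‖ * (1 + ‖G‖ ^ 2 / c) := by field_simp
    _ ≤ 2 * ‖G‖ / c * ‖H‖ * 2 := by gcongr; linarith
    _ = 4 * ‖G‖ / c * ‖H‖ := by ring

/-- for every `G ≠ 0` and every direction `H`, the Fréchet derivative of
the PSM strain measure satisfies `‖DS(G)[H]‖ ≤ (2(1 + √d)/‖G‖)·‖H‖`
(Frobenius norms). -/
theorem psm_strain_fderiv_bound (d : ℕ) (G H : Matrix (Fin d) (Fin d) ℝ)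
    (hG : G ≠ 0) :
    ‖fderiv ℝ (psmStrain (d := d)) G H‖ ≤
      2 * (1 + Real.sqrt d) / ‖G‖ * ‖H‖ := by
  have hG' : 0 < ‖G‖ := norm_pos_iff.mpr hG
  have hd : 1 ≤ Real.sqrt d := by
    have : d ≠ 0 := by rintro rfl; exact hG (Subsingleton.elim G 0)
    exact Real.one_le_sqrt.mpr (Nat.one_le_cast.mpr (Nat.one_le_iff_ne_zero.mpr this))
  have hfactor : 4 * ‖G‖ / (1 + ‖G‖ ^ 2) ≤ 4 / ‖G‖ := by
    rw [div_le_div_iff₀ (by positivity) hG']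
    nlinarith
  calc _ ≤ 4 * ‖G‖ / (1 + ‖G‖ ^ 2) * ‖H‖ := norm_fderiv_psmStrain_apply_le G H
    _ ≤ 4 / ‖G‖ * ‖H‖ := by gcongr
    _ ≤ 2 * (1 + Real.sqrt d) / ‖G‖ * ‖H‖ := by gcongr; linarith
end

section
/- Suppose G : [0,∞) × ℝ × Ω → M_d(ℝ) is differentiable, satisfies ∂_t G + (1/𝔚𝔢) ∂_s G + (u·∇)G = G·∇u pointwise, and that B := Gᵀ·G is invertible at every point. Then the Cauchy–Green tensor C := B⁻¹ is differentiable and satisfies ∂_t C + (1/𝔚𝔢) ∂_s C + (u·∇)C = −C·(∇u)ᵀ − (∇u)·C pointwise on [0,∞) × ℝ × Ω. -/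
/-!
The operator `∂_t + (1/𝔚𝔢) ∂_s + u·∇` applied to a differentiable function at `(s, t, x)` is its
Fréchet derivative in the direction `(1/𝔚𝔢, 1, u)`, so it obeys the product rule and the rule
`δ(B⁻¹) = -B⁻¹ (δB) B⁻¹`. The equation for `G` says `δG = G ∇u`; hence
`δB = (δG)ᵀ G + Gᵀ δG = (∇u)ᵀ B + B ∇u`, and `δC = -C (δB) C = -C (∇u)ᵀ - ∇u C`.
-/

open Matrix

/-- The velocity gradient matrix `(∇v)_{kj} = ∂v_j/∂y_k` of a vector field
`v : ℝᵈ → ℝᵈ` at a point `y`. -/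
noncomputable def gradVF {d : ℕ} (v : (Fin d → ℝ) → (Fin d → ℝ)) (y : Fin d → ℝ) :
    Matrix (Fin d) (Fin d) ℝ :=
  Matrix.of fun k j => fderiv ℝ (fun z => v z j) y (Pi.single k 1)

-- Any norm would do: the statement only differentiates real-valued maps.
attribute [local instance] Matrix.linftyOpNormedRing Matrix.linftyOpNormedAlgebra

theorem Matrix.inv_mul_mul_add_mul_mul_inv {n α : Type*} [Fintype n] [DecidableEq n]
    [CommRing α] {B : Matrix n n α} (hB : IsUnit B) (M N : Matrix n n α) :
    B⁻¹ * (B * N + M * B) * B⁻¹ = N * B⁻¹ + B⁻¹ * M := by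
  have hdet := (isUnit_iff_isUnit_det B).mp hB
  rw [Matrix.mul_add, Matrix.add_mul, ← Matrix.mul_assoc, nonsing_inv_mul B hdet,
    Matrix.one_mul, Matrix.mul_assoc, Matrix.mul_assoc, mul_nonsing_inv B hdet, Matrix.mul_one]

section MatrixCalculus

variable {E : Type*} [NormedAddCommGroup E] [NormedSpace ℝ E] {n : Type*} [Fintype n]
  [DecidableEq n] {A : E → Matrix n n ℝ} {A' : E →L[ℝ] Matrix n n ℝ} {p : E}

theorem HasFDerivAt.matrix_entry (hA : HasFDerivAt A A' p) (i j : n) :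
    HasFDerivAt (fun q => A q i j)
      ((entryLinearMap ℝ ℝ i j).toContinuousLinearMap.comp A') p :=
  (entryLinearMap ℝ ℝ i j).toContinuousLinearMap.hasFDerivAt.comp p hA

theorem differentiableAt_matrix_iff :
    DifferentiableAt ℝ A p ↔ ∀ i j, DifferentiableAt ℝ (fun q => A q i j) p := by
  refine ⟨fun hA i j => (hA.hasFDerivAt.matrix_entry i j).differentiableAt, fun h => ?_⟩
  have hsum : A = fun q => ∑ i, ∑ j, A q i j • single i j (1 : ℝ) := by
    funext q
    simpa using matrix_eq_sum_single (A q)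
  rw [hsum]
  fun_prop (disch := exact h _ _)

theorem HasFDerivAt.matrix_transpose (hA : HasFDerivAt A A' p) :
    HasFDerivAt (fun q => (A q)ᵀ)
      ((transposeLinearEquiv n n ℝ ℝ).toLinearMap.toContinuousLinearMap.comp A') p :=
  (transposeLinearEquiv n n ℝ ℝ).toLinearMap.toContinuousLinearMap.hasFDerivAt.comp p hA

theorem HasFDerivAt.matrix_inv (hA : HasFDerivAt A A' p) (hAp : IsUnit (A p)) :
    HasFDerivAt (fun q => (A q)⁻¹)
      ((-ContinuousLinearMap.mulLeftRight ℝ _ (A p)⁻¹ (A p)⁻¹).comp A') p := by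
  obtain ⟨U, hU⟩ := hAp
  have hinv := hasFDerivAt_ringInverse (𝕜 := ℝ) U
  rw [← Ring.inverse_unit U, hU] at hinv
  simp only [nonsing_inv_eq_ringInverse]
  exact hinv.comp p hA

theorem HasFDerivAt.exists_hasFDerivAt_inv_transpose_mul_self (hA : HasFDerivAt A A' p)
    (hAp : IsUnit ((A p)ᵀ * A p)) :
    ∃ C' : E →L[ℝ] Matrix n n ℝ, HasFDerivAt (fun q => ((A q)ᵀ * A q)⁻¹) C' p ∧
      ∀ w, C' w = -(((A p)ᵀ * A p)⁻¹ * ((A p)ᵀ * A' w + (A' w)ᵀ * A p) * ((A p)ᵀ * A p)⁻¹) :=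
  ⟨_, (hA.matrix_transpose.mul' hA).matrix_inv hAp, fun _ => rfl⟩

end MatrixCalculus

section Transport

variable {d : ℕ} {F : Type*} [NormedAddCommGroup F] [NormedSpace ℝ F]

noncomputable def transportDeriv (c : ℝ) (v : Fin d → ℝ) (f : ℝ × ℝ × (Fin d → ℝ) → F)
    (s t : ℝ) (x : Fin d → ℝ) : F :=
  deriv (fun t' => f (s, t', x)) t + c • deriv (fun s' => f (s', t, x)) s
    + ∑ k, v k • fderiv ℝ (fun x' => f (s, t, x')) x (Pi.single k 1)

theorem HasFDerivAt.transportDeriv_eq {f : ℝ × ℝ × (Fin d → ℝ) → F}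
    {f' : ℝ × ℝ × (Fin d → ℝ) →L[ℝ] F} {s t : ℝ} {x : Fin d → ℝ}
    (hf : HasFDerivAt f f' (s, t, x)) (c : ℝ) (v : Fin d → ℝ) :
    transportDeriv c v f s t x = f' (c, 1, v) := by
  have ht : HasDerivAt (fun t' => f (s, t', x)) (f' (0, 1, 0)) t :=
    hf.comp_hasDerivAt t
      ((hasDerivAt_const t s).prodMk ((hasDerivAt_id t).prodMk (hasDerivAt_const t x)))
  have hs : HasDerivAt (fun s' => f (s', t, x)) (f' (1, 0, 0)) s :=
    hf.comp_hasDerivAt s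
      ((hasDerivAt_id s).prodMk ((hasDerivAt_const s t).prodMk (hasDerivAt_const s x)))
  have hx : HasFDerivAt (fun x' => f (s, t, x'))
      (f'.comp ((0 : (Fin d → ℝ) →L[ℝ] ℝ).prod ((0 : (Fin d → ℝ) →L[ℝ] ℝ).prod
        (ContinuousLinearMap.id ℝ _)))) x :=
    hf.comp x ((hasFDerivAt_const s x).prodMk ((hasFDerivAt_const t x).prodMk (hasFDerivAt_id x)))
  simp only [transportDeriv, ht.deriv, hs.deriv, hx.fderiv, ContinuousLinearMap.comp_apply,
    ContinuousLinearMap.prod_apply, _root_.zero_apply, ContinuousLinearMap.id_apply,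
    ← map_smul, ← map_sum, ← map_add]
  congr 1
  simp [Prod.ext_iff, Prod.fst_sum, Prod.snd_sum, ← pi_eq_sum_univ']

theorem HasFDerivAt.transportDeriv_matrix_entry {n : Type*} [Fintype n] [DecidableEq n]
    {A : ℝ × ℝ × (Fin d → ℝ) → Matrix n n ℝ} {A' : ℝ × ℝ × (Fin d → ℝ) →L[ℝ] Matrix n n ℝ}
    {s t : ℝ} {x : Fin d → ℝ} (hA : HasFDerivAt A A' (s, t, x)) (c : ℝ) (v : Fin d → ℝ)
    (i j : n) :
    transportDeriv c v (fun q => A q i j) s t x = A' (c, 1, v) i j :=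
  (hA.matrix_entry i j).transportDeriv_eq c v

end Transport

theorem cauchy_green_tensor_transport_general (d : ℕ) (We : ℝ)
    (Ω : Set (Fin d → ℝ))
    (u : ℝ → (Fin d → ℝ) → (Fin d → ℝ))
    (G : ℝ → ℝ → (Fin d → ℝ) → Matrix (Fin d) (Fin d) ℝ)
    (hG : ∀ (s t : ℝ) (x : Fin d → ℝ), 0 ≤ s → x ∈ Ω → ∀ i j : Fin d,
      DifferentiableAt ℝ
        (fun q : ℝ × ℝ × (Fin d → ℝ) => G q.1 q.2.1 q.2.2 i j) (s, t, x))
    (hPDE : ∀ (s t : ℝ) (x : Fin d → ℝ), 0 ≤ s → x ∈ Ω → ∀ i j : Fin d,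
      deriv (fun t' => G s t' x i j) t
          + (1 / We) * deriv (fun s' => G s' t x i j) s
          + ∑ k : Fin d, u t x k *
              fderiv ℝ (fun x' => G s t x' i j) x (Pi.single k 1)
        = (G s t x * gradVF (u t) x) i j)
    (hinv : ∀ (s t : ℝ) (x : Fin d → ℝ), 0 ≤ s → x ∈ Ω →
      IsUnit ((G s t x)ᵀ * G s t x)) :
    ∀ (s t : ℝ) (x : Fin d → ℝ), 0 ≤ s → x ∈ Ω → ∀ i j : Fin d,
      DifferentiableAt ℝ
          (fun q : ℝ × ℝ × (Fin d → ℝ) =>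
            ((G q.1 q.2.1 q.2.2)ᵀ * G q.1 q.2.1 q.2.2)⁻¹ i j) (s, t, x) ∧
      deriv (fun t' => ((G s t' x)ᵀ * G s t' x)⁻¹ i j) t
          + (1 / We) * deriv (fun s' => ((G s' t x)ᵀ * G s' t x)⁻¹ i j) s
          + ∑ k : Fin d, u t x k *
              fderiv ℝ (fun x' => ((G s t x')ᵀ * G s t x')⁻¹ i j) x (Pi.single k 1)
        = (-(((G s t x)ᵀ * G s t x)⁻¹ * (gradVF (u t) x)ᵀ)
            - gradVF (u t) x * ((G s t x)ᵀ * G s t x)⁻¹) i j := by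
  intro s t x hs hx i j
  set L := gradVF (u t) x
  let F : ℝ × ℝ × (Fin d → ℝ) → Matrix (Fin d) (Fin d) ℝ := fun q => G q.1 q.2.1 q.2.2
  have hF : HasFDerivAt F (fderiv ℝ F (s, t, x)) (s, t, x) :=
    (differentiableAt_matrix_iff.mpr (hG s t x hs hx)).hasFDerivAt
  have hFw : fderiv ℝ F (s, t, x) (1 / We, 1, u t x) = G s t x * L := by
    ext a b
    exact (hF.transportDeriv_matrix_entry (1 / We) (u t x) a b).symm.trans (hPDE s t x hs hx a b)
  obtain ⟨C', hC, hC'⟩ := hF.exists_hasFDerivAt_inv_transpose_mul_self (hinv s t x hs hx)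
  refine ⟨(hC.matrix_entry i j).differentiableAt,
    (hC.transportDeriv_matrix_entry (1 / We) (u t x) i j).trans (congrFun (congrFun ?_ i) j)⟩
  rw [hC', hFw, transpose_mul, ← Matrix.mul_assoc, Matrix.mul_assoc Lᵀ,
    inv_mul_mul_add_mul_mul_inv (hinv s t x hs hx)]
  abel

/-- if the deformation gradient `G(s,t,x)` is differentiable, satisfies
the transport equation `∂_t G + (1/𝔚𝔢) ∂_s G + (u·∇)G = G·∇u` pointwise on
`[0,∞) × ℝ × Ω`, and the Finger tensor `B := Gᵀ·G` is invertible at every point, then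
the Cauchy–Green tensor `C := B⁻¹` is differentiable and satisfies
`∂_t C + (1/𝔚𝔢) ∂_s C + (u·∇)C = −C·(∇u)ᵀ − (∇u)·C` pointwise on `[0,∞) × ℝ × Ω`. -/
theorem cauchy_green_tensor_transport (d : ℕ) (We : ℝ) (hWe : 0 < We)
    (Ω : Set (Fin d → ℝ)) (hΩ : IsOpen Ω)
    (u : ℝ → (Fin d → ℝ) → (Fin d → ℝ))
    (hu : ∀ (t : ℝ), ∀ x ∈ Ω, DifferentiableAt ℝ (u t) x)
    (G : ℝ → ℝ → (Fin d → ℝ) → Matrix (Fin d) (Fin d) ℝ)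
    (hG : ∀ (s t : ℝ) (x : Fin d → ℝ), 0 ≤ s → x ∈ Ω → ∀ i j : Fin d,
      DifferentiableAt ℝ
        (fun q : ℝ × ℝ × (Fin d → ℝ) => G q.1 q.2.1 q.2.2 i j) (s, t, x))
    (hPDE : ∀ (s t : ℝ) (x : Fin d → ℝ), 0 ≤ s → x ∈ Ω → ∀ i j : Fin d,
      deriv (fun t' => G s t' x i j) t
          + (1 / We) * deriv (fun s' => G s' t x i j) s
          + ∑ k : Fin d, u t x k *
              fderiv ℝ (fun x' => G s t x' i j) x (Pi.single k 1)
        = (G s t x * gradVF (u t) x) i j)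
    (hinv : ∀ (s t : ℝ) (x : Fin d → ℝ), 0 ≤ s → x ∈ Ω →
      IsUnit ((G s t x)ᵀ * G s t x)) :
    ∀ (s t : ℝ) (x : Fin d → ℝ), 0 ≤ s → x ∈ Ω → ∀ i j : Fin d,
      DifferentiableAt ℝ
          (fun q : ℝ × ℝ × (Fin d → ℝ) =>
            ((G q.1 q.2.1 q.2.2)ᵀ * G q.1 q.2.1 q.2.2)⁻¹ i j) (s, t, x) ∧
      deriv (fun t' => ((G s t' x)ᵀ * G s t' x)⁻¹ i j) t
          + (1 / We) * deriv (fun s' => ((G s' t x)ᵀ * G s' t x)⁻¹ i j) s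
          + ∑ k : Fin d, u t x k *
              fderiv ℝ (fun x' => ((G s t x')ᵀ * G s t x')⁻¹ i j) x (Pi.single k 1)
        = (-(((G s t x)ᵀ * G s t x)⁻¹ * (gradVF (u t) x)ᵀ)
            - gradVF (u t) x * ((G s t x)ᵀ * G s t x)⁻¹) i j :=
  cauchy_green_tensor_transport_general d We Ω u G hG hPDE hinv
end

section
/- Let 𝔚𝔢 > 0, ω ∈ ℝ, Ω ⊆ ℝᵈ open, and u : ℝ × Ω → ℝᵈ continuously differentiable. Suppose B : [0,∞) × ℝ × Ω → M_d(ℝ) is continuously differentiable, satisfies ∂_t B + (1/𝔚𝔢) ∂_s B + (u·∇)B = B·∇u + (∇u)ᵀ·B pointwise and B(0,t,x) = 𝟙 for all (t,x). Define τ(t,x) = (ω/𝔚𝔢) ∫₀^∞ e^{−s}(B(s,t,x) − 𝟙) ds, and assume: (i) for each (t,x) the functions s ↦ e^{−s}(B(s,t,x) − 𝟙), s ↦ e^{−s}∂_t B(s,t,x), s ↦ e^{−s}∂_s B(s,t,x) and s ↦ e^{−s}∂_{x_k}B(s,t,x) (k = 1,…,d) are integrable on (0,∞), with domination allowing differentiation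 under the integral sign in t and x; (ii) e^{−s}(B(s,t,x) − 𝟙) → 0 as s → ∞ for each (t,x). Then τ is differentiable and satisfies the Upper Convected Maxwell equation 𝔚𝔢(∂_t τ + (u·∇)τ − (∇u)ᵀ·τ − τ·∇u) + τ = 2ω·Du pointwise, where Du = (∇u + (∇u)ᵀ)/2. -/
open Matrix MeasureTheory Filter

/-!
Multiply the transport equation for `B` by the memory kernel `e^{-s}` and integrate over
`s ∈ (0, ∞)`. The `∂_t` and `(u·∇)` terms become those of `τ` by differentiation under the
integral sign; writing `B = (B - 𝟙) + 𝟙` and using `∫₀^∞ e^{-s} ds = 1`, the right-hand side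
becomes `τ·∇u + (∇u)ᵀ·τ` plus `(ω/𝔚𝔢)(∇u + (∇u)ᵀ)`; and integrating by parts, with
`B(0) = 𝟙` killing the boundary term at `0` and the decay killing the one at `∞`, turns
`∫ e^{-s} ∂_s B ds` back into `∫ e^{-s} (B - 𝟙) ds`, which produces the relaxation term `τ`.
-/

open Real Set Topology

theorem integral_exp_neg_mul_deriv_eq {g : ℝ → ℝ} {c : ℝ}
    (hg : ∀ s, 0 ≤ s → DifferentiableAt ℝ g s) (hg0 : g 0 = c)
    (hint : IntegrableOn (fun s => exp (-s) * (g s - c)) (Ioi 0))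
    (hint_deriv : IntegrableOn (fun s => exp (-s) * deriv g s) (Ioi 0))
    (hlim : Tendsto (fun s => exp (-s) * (g s - c)) atTop (𝓝 0)) :
    ∫ s in Ioi 0, exp (-s) * deriv g s = ∫ s in Ioi 0, exp (-s) * (g s - c) := by
  have hderiv : ∀ s ∈ Ici (0 : ℝ), HasDerivAt (fun s => exp (-s) * (g s - c))
      (-(exp (-s) * (g s - c)) + exp (-s) * deriv g s) s := fun s hs =>
    ((hasDerivAt_neg' s).exp.fun_mul ((hg s hs).hasDerivAt.sub_const c)).congr_deriv (by ring)
  have hibp := integral_Ioi_of_hasDerivAt_of_tendsto' hderiv (hint.neg.add hint_deriv) hlim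
  rw [integral_add (f := fun s => -(exp (-s) * (g s - c))) hint.neg hint_deriv, integral_neg,
    hg0] at hibp
  simp only [neg_zero, exp_zero, sub_self, mul_zero] at hibp
  linarith

theorem DifferentiableAt.comp_prodMk_const {𝕜 E F G : Type*} [NontriviallyNormedField 𝕜]
    [NormedAddCommGroup E] [NormedSpace 𝕜 E] [NormedAddCommGroup F] [NormedSpace 𝕜 F]
    [NormedAddCommGroup G] [NormedSpace 𝕜 G] {f : E × F → G} {x : E} {y : F}
    (hf : DifferentiableAt 𝕜 f (x, y)) : DifferentiableAt 𝕜 (fun x' => f (x', y)) x :=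
  hf.comp x (differentiableAt_id.prodMk (differentiableAt_const y))

section EntrywiseIntegral

variable {ι l m n : Type*} [MeasurableSpace ι] [Fintype m] {μ : Measure ι}

theorem integrable_mul_apply {X : ι → Matrix l m ℝ} (hX : ∀ a b, Integrable (fun s => X s a b) μ)
    (M : Matrix m n ℝ) (i : l) (j : n) : Integrable (fun s => (X s * M) i j) μ := by
  simp only [mul_apply]
  exact integrable_finsetSum _ fun k _ => (hX i k).mul_const _

theorem integrable_mul_apply' {X : ι → Matrix m n ℝ} (hX : ∀ a b, Integrable (fun s => X s a b) μ)
    (M : Matrix l m ℝ) (i : l) (j : n) : Integrable (fun s => (M * X s) i j) μ := by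
  simp only [mul_apply]
  exact integrable_finsetSum _ fun k _ => (hX k j).const_mul _

theorem integral_mul_apply {X : ι → Matrix l m ℝ} (hX : ∀ a b, Integrable (fun s => X s a b) μ)
    (M : Matrix m n ℝ) (i : l) (j : n) :
    ∫ s, (X s * M) i j ∂μ = ((Matrix.of fun a b => ∫ s, X s a b ∂μ) * M) i j := by
  simp only [mul_apply, of_apply]
  rw [integral_finsetSum _ fun k _ => (hX i k).mul_const _]
  simp only [integral_mul_const]

theorem integral_mul_apply' {X : ι → Matrix m n ℝ} (hX : ∀ a b, Integrable (fun s => X s a b) μ)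
    (M : Matrix l m ℝ) (i : l) (j : n) :
    ∫ s, (M * X s) i j ∂μ = (M * Matrix.of fun a b => ∫ s, X s a b ∂μ) i j := by
  simp only [mul_apply, of_apply]
  rw [integral_finsetSum _ fun k _ => (hX k j).const_mul _]
  simp only [integral_const_mul]

end EntrywiseIntegral

noncomputable def memoryStrainIntegral {n : Type*} [DecidableEq n] (F : ℝ → Matrix n n ℝ) :
    Matrix n n ℝ :=
  Matrix.of fun a b => ∫ s in Ioi 0, exp (-s) * (F s a b - (1 : Matrix n n ℝ) a b)

section MemoryStrain

variable {n : Type*} [Fintype n] [DecidableEq n] {F : ℝ → Matrix n n ℝ}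

theorem integral_exp_neg_mul_mul_add_mul_apply
    (hF : ∀ a b, IntegrableOn (fun s => exp (-s) * (F s a b - (1 : Matrix n n ℝ) a b)) (Ioi 0))
    (M N : Matrix n n ℝ) (i j : n) :
    ∫ s in Ioi 0, exp (-s) * (F s * M + N * F s) i j
      = (memoryStrainIntegral F * M + N * memoryStrainIntegral F + M + N) i j := by
  set X : ℝ → Matrix n n ℝ := fun s => exp (-s) • (F s - 1)
  have hX : ∀ a b, IntegrableOn (fun s => X s a b) (Ioi 0) := hF
  have hsplit : ∀ s, exp (-s) * (F s * M + N * F s) i j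
      = (X s * M) i j + (N * X s) i j + exp (-s) * (M + N) i j := fun s => by
    have hsmul : exp (-s) • F s = X s + exp (-s) • 1 := by simp [X, smul_sub]
    rw [← smul_eq_mul, ← Matrix.smul_apply, smul_add, ← smul_mul, ← Matrix.mul_smul, hsmul]
    simp only [add_mul, mul_add, smul_mul, Matrix.mul_smul, one_mul, mul_one, Matrix.add_apply,
      Matrix.smul_apply, smul_eq_mul]
    ring
  simp_rw [hsplit]
  rw [integral_add ((integrable_mul_apply hX M i j).fun_add (integrable_mul_apply' hX N i j))
      ((integrableOn_exp_neg_Ioi 0).mul_const _),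
    integral_add (integrable_mul_apply hX M i j) (integrable_mul_apply' hX N i j),
    integral_mul_apply hX, integral_mul_apply' hX, integral_mul_const, integral_exp_neg_Ioi_zero]
  simp only [Matrix.add_apply, one_mul, add_assoc]
  rfl

theorem integral_exp_neg_mul_transport_eq {ι : Type*} [Fintype ι] {M N : Matrix n n ℝ}
    {c : ℝ} {v : ι → ℝ} {i j : n} {Dt : ℝ → ℝ} {Dx : ι → ℝ → ℝ}
    (hF : ∀ s, 0 ≤ s → DifferentiableAt ℝ (fun s' => F s' i j) s) (hF0 : F 0 = 1)
    (hpde : ∀ s, 0 ≤ s →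
      Dt s + c * deriv (fun s' => F s' i j) s + ∑ k, v k * Dx k s = (F s * M + N * F s) i j)
    (hint : ∀ a b, IntegrableOn (fun s => exp (-s) * (F s a b - (1 : Matrix n n ℝ) a b)) (Ioi 0))
    (hint_t : IntegrableOn (fun s => exp (-s) * Dt s) (Ioi 0))
    (hint_s : IntegrableOn (fun s => exp (-s) * deriv (fun s' => F s' i j) s) (Ioi 0))
    (hint_x : ∀ k, IntegrableOn (fun s => exp (-s) * Dx k s) (Ioi 0))
    (hlim : Tendsto (fun s => exp (-s) * (F s i j - (1 : Matrix n n ℝ) i j)) atTop (𝓝 0)) :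
    (∫ s in Ioi 0, exp (-s) * Dt s) + c * memoryStrainIntegral F i j
        + ∑ k, v k * ∫ s in Ioi 0, exp (-s) * Dx k s
      = (memoryStrainIntegral F * M + N * memoryStrainIntegral F + M + N) i j := by
  have hibp : ∫ s in Ioi 0, exp (-s) * deriv (fun s' => F s' i j) s = memoryStrainIntegral F i j :=
    integral_exp_neg_mul_deriv_eq hF (congrFun₂ hF0 i j) (hint i j) hint_s hlim
  have hint_sum : IntegrableOn (fun s => ∑ k, v k * (exp (-s) * Dx k s)) (Ioi 0) :=
    integrable_finsetSum _ fun k _ => (hint_x k).const_mul _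
  calc _ = ∫ s in Ioi 0, exp (-s) * Dt s + c * (exp (-s) * deriv (fun s' => F s' i j) s)
          + ∑ k, v k * (exp (-s) * Dx k s) := by
        rw [integral_add (hint_t.fun_add (hint_s.const_mul c)) hint_sum,
          integral_add hint_t (hint_s.const_mul c), integral_const_mul, hibp,
          integral_finsetSum _ fun k _ => (hint_x k).const_mul _]
        simp only [integral_const_mul]
    _ = ∫ s in Ioi 0, exp (-s) * (F s * M + N * F s) i j := by
        refine setIntegral_congr_fun measurableSet_Ioi fun s hs => ?_
        rw [← hpde s (le_of_lt hs), mul_add, mul_add, Finset.mul_sum]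
        simp only [mul_left_comm (exp (-s))]
    _ = _ := integral_exp_neg_mul_mul_add_mul_apply hint M N i j

end MemoryStrain

theorem upper_convected_maxwell_general (d : ℕ) (We ω : ℝ) (hWe : 0 < We)
    (Ω : Set (Fin d → ℝ))
    (u : ℝ → (Fin d → ℝ) → (Fin d → ℝ))
    (B : ℝ → ℝ → (Fin d → ℝ) → Matrix (Fin d) (Fin d) ℝ)
    (hB : ∀ (s t : ℝ) (x : Fin d → ℝ), 0 ≤ s → x ∈ Ω → ∀ i j : Fin d,
      ContDiffAt ℝ 1
        (fun q : ℝ × ℝ × (Fin d → ℝ) => B q.1 q.2.1 q.2.2 i j) (s, t, x))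
    (hPDE : ∀ (s t : ℝ) (x : Fin d → ℝ), 0 ≤ s → x ∈ Ω → ∀ i j : Fin d,
      deriv (fun t' => B s t' x i j) t
          + (1 / We) * deriv (fun s' => B s' t x i j) s
          + ∑ k : Fin d, u t x k *
              fderiv ℝ (fun x' => B s t x' i j) x (Pi.single k 1)
        = (B s t x * gradVF (u t) x + (gradVF (u t) x)ᵀ * B s t x) i j)
    (hB0 : ∀ (t : ℝ) (x : Fin d → ℝ), B 0 t x = 1)
    (τ : ℝ → (Fin d → ℝ) → Matrix (Fin d) (Fin d) ℝ)
    (hτ : ∀ (t : ℝ) (x : Fin d → ℝ) (i j : Fin d),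
      τ t x i j = (ω / We) * ∫ s in Set.Ioi (0 : ℝ),
        Real.exp (-s) * (B s t x i j - (1 : Matrix (Fin d) (Fin d) ℝ) i j))
    -- (i) integrability of the integrands
    (hint0 : ∀ (t : ℝ), ∀ x ∈ Ω, ∀ i j : Fin d, IntegrableOn
      (fun s => Real.exp (-s) * (B s t x i j - (1 : Matrix (Fin d) (Fin d) ℝ) i j))
      (Set.Ioi (0 : ℝ)))
    (hint1 : ∀ (t : ℝ), ∀ x ∈ Ω, ∀ i j : Fin d, IntegrableOn
      (fun s => Real.exp (-s) * deriv (fun t' => B s t' x i j) t) (Set.Ioi (0 : ℝ)))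
    (hint2 : ∀ (t : ℝ), ∀ x ∈ Ω, ∀ i j : Fin d, IntegrableOn
      (fun s => Real.exp (-s) * deriv (fun s' => B s' t x i j) s) (Set.Ioi (0 : ℝ)))
    (hint3 : ∀ (t : ℝ), ∀ x ∈ Ω, ∀ i j k : Fin d, IntegrableOn
      (fun s => Real.exp (-s) * fderiv ℝ (fun x' => B s t x' i j) x (Pi.single k 1))
      (Set.Ioi (0 : ℝ)))
    -- (i) domination allowing differentiation under the integral sign in `t`
    (hswap_t : ∀ (t : ℝ), ∀ x ∈ Ω, ∀ i j : Fin d,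
      HasDerivAt (fun t' => ∫ s in Set.Ioi (0 : ℝ),
          Real.exp (-s) * (B s t' x i j - (1 : Matrix (Fin d) (Fin d) ℝ) i j))
        (∫ s in Set.Ioi (0 : ℝ),
          Real.exp (-s) * deriv (fun t' => B s t' x i j) t) t)
    -- (i) domination allowing differentiation under the integral sign in `x`
    (hswap_x : ∀ (t : ℝ), ∀ x ∈ Ω, ∀ i j : Fin d,
      DifferentiableAt ℝ (fun x' => ∫ s in Set.Ioi (0 : ℝ),
          Real.exp (-s) * (B s t x' i j - (1 : Matrix (Fin d) (Fin d) ℝ) i j)) x ∧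
      ∀ k : Fin d,
        fderiv ℝ (fun x' => ∫ s in Set.Ioi (0 : ℝ),
            Real.exp (-s) * (B s t x' i j - (1 : Matrix (Fin d) (Fin d) ℝ) i j)) x
          (Pi.single k 1)
        = ∫ s in Set.Ioi (0 : ℝ),
            Real.exp (-s) * fderiv ℝ (fun x' => B s t x' i j) x (Pi.single k 1))
    -- (ii) decay at infinity
    (hdecay : ∀ (t : ℝ), ∀ x ∈ Ω, ∀ i j : Fin d,
      Tendsto (fun s =>
          Real.exp (-s) * (B s t x i j - (1 : Matrix (Fin d) (Fin d) ℝ) i j))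
        atTop (nhds 0)) :
    ∀ (t : ℝ), ∀ x ∈ Ω, ∀ i j : Fin d,
      (DifferentiableAt ℝ (fun t' => τ t' x i j) t ∧
        DifferentiableAt ℝ (fun x' => τ t x' i j) x) ∧
      We * (deriv (fun t' => τ t' x i j) t
            + ∑ k : Fin d, u t x k *
                fderiv ℝ (fun x' => τ t x' i j) x (Pi.single k 1)
            - ((gradVF (u t) x)ᵀ * τ t x) i j
            - (τ t x * gradVF (u t) x) i j)
          + τ t x i j
        = 2 * ω *
            (((2 : ℝ)⁻¹ • (gradVF (u t) x + (gradVF (u t) x)ᵀ)) i j) := by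
  intro t x hx i j
  have hτP : τ t x = (ω / We) • memoryStrainIntegral fun s => B s t x := by
    ext a b; exact hτ t x a b
  have hτ_t : (fun t' => τ t' x i j) = fun t' => (ω / We) * ∫ s in Ioi 0,
      exp (-s) * (B s t' x i j - (1 : Matrix (Fin d) (Fin d) ℝ) i j) :=
    funext fun t' => hτ t' x i j
  have hτ_x : (fun x' => τ t x' i j) = fun x' => (ω / We) * ∫ s in Ioi 0,
      exp (-s) * (B s t x' i j - (1 : Matrix (Fin d) (Fin d) ℝ) i j) :=
    funext fun x' => hτ t x' i j
  have hdt := (hswap_t t x hx i j).const_mul (ω / We)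
  obtain ⟨hdx, hfdx⟩ := hswap_x t x hx i j
  have hlaplace := integral_exp_neg_mul_transport_eq (F := fun s => B s t x) (i := i) (j := j)
    (c := 1 / We) (N := (gradVF (u t) x)ᵀ) (Dt := fun s => deriv (fun t' => B s t' x i j) t)
    (Dx := fun k s => fderiv ℝ (fun x' => B s t x' i j) x (Pi.single k 1))
    (fun s hs => ((hB s t x hs hx i j).differentiableAt one_ne_zero).comp_prodMk_const)
    (hB0 t x) (fun s hs => hPDE s t x hs hx i j) (hint0 t x hx) (hint1 t x hx i j)
    (hint2 t x hx i j) (hint3 t x hx i j) (hdecay t x hx i j)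
  rw [hτ_t, hτ_x]
  refine ⟨⟨hdt.differentiableAt, hdx.const_mul _⟩, ?_⟩
  simp only [hdt.deriv, fderiv_const_mul hdx, _root_.smul_apply, hfdx, smul_eq_mul,
    hτP, Matrix.mul_smul, Matrix.smul_mul, Matrix.smul_apply, Matrix.add_apply] at hlaplace ⊢
  simp only [mul_left_comm (u t x _) (ω / We), ← Finset.mul_sum]
  field_simp at hlaplace ⊢
  linear_combination ω * hlaplace

/-- if the Finger tensor `B(s,t,x)` is `C¹`, satisfies the transport
equation `∂_t B + (1/𝔚𝔢)∂_s B + (u·∇)B = B·∇u + (∇u)ᵀ·B` with `B(0,t,x) = 𝟙`, and the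
stress `τ(t,x) = (ω/𝔚𝔢)∫₀^∞ e^{−s}(B(s,t,x) − 𝟙) ds` is defined with integrands that
are integrable and admit differentiation under the integral sign in `t` and `x`, and
`e^{−s}(B − 𝟙) → 0` as `s → ∞`, then `τ` is differentiable and satisfies the Upper
Convected Maxwell equation
`𝔚𝔢(∂_t τ + (u·∇)τ − (∇u)ᵀ·τ − τ·∇u) + τ = 2ω·Du` with `Du = (∇u + (∇u)ᵀ)/2`. -/
theorem upper_convected_maxwell (d : ℕ) (We ω : ℝ) (hWe : 0 < We)
    (Ω : Set (Fin d → ℝ)) (hΩ : IsOpen Ω)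
    (u : ℝ → (Fin d → ℝ) → (Fin d → ℝ))
    (hu : ContDiff ℝ 1 (fun p : ℝ × (Fin d → ℝ) => u p.1 p.2))
    (B : ℝ → ℝ → (Fin d → ℝ) → Matrix (Fin d) (Fin d) ℝ)
    (hB : ∀ (s t : ℝ) (x : Fin d → ℝ), 0 ≤ s → x ∈ Ω → ∀ i j : Fin d,
      ContDiffAt ℝ 1
        (fun q : ℝ × ℝ × (Fin d → ℝ) => B q.1 q.2.1 q.2.2 i j) (s, t, x))
    (hPDE : ∀ (s t : ℝ) (x : Fin d → ℝ), 0 ≤ s → x ∈ Ω → ∀ i j : Fin d,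
      deriv (fun t' => B s t' x i j) t
          + (1 / We) * deriv (fun s' => B s' t x i j) s
          + ∑ k : Fin d, u t x k *
              fderiv ℝ (fun x' => B s t x' i j) x (Pi.single k 1)
        = (B s t x * gradVF (u t) x + (gradVF (u t) x)ᵀ * B s t x) i j)
    (hB0 : ∀ (t : ℝ) (x : Fin d → ℝ), B 0 t x = 1)
    (τ : ℝ → (Fin d → ℝ) → Matrix (Fin d) (Fin d) ℝ)
    (hτ : ∀ (t : ℝ) (x : Fin d → ℝ) (i j : Fin d),
      τ t x i j = (ω / We) * ∫ s in Set.Ioi (0 : ℝ),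
        Real.exp (-s) * (B s t x i j - (1 : Matrix (Fin d) (Fin d) ℝ) i j))
    -- (i) integrability of the integrands
    (hint0 : ∀ (t : ℝ), ∀ x ∈ Ω, ∀ i j : Fin d, IntegrableOn
      (fun s => Real.exp (-s) * (B s t x i j - (1 : Matrix (Fin d) (Fin d) ℝ) i j))
      (Set.Ioi (0 : ℝ)))
    (hint1 : ∀ (t : ℝ), ∀ x ∈ Ω, ∀ i j : Fin d, IntegrableOn
      (fun s => Real.exp (-s) * deriv (fun t' => B s t' x i j) t) (Set.Ioi (0 : ℝ)))
    (hint2 : ∀ (t : ℝ), ∀ x ∈ Ω, ∀ i j : Fin d, IntegrableOn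
      (fun s => Real.exp (-s) * deriv (fun s' => B s' t x i j) s) (Set.Ioi (0 : ℝ)))
    (hint3 : ∀ (t : ℝ), ∀ x ∈ Ω, ∀ i j k : Fin d, IntegrableOn
      (fun s => Real.exp (-s) * fderiv ℝ (fun x' => B s t x' i j) x (Pi.single k 1))
      (Set.Ioi (0 : ℝ)))
    -- (i) domination allowing differentiation under the integral sign in `t`
    (hswap_t : ∀ (t : ℝ), ∀ x ∈ Ω, ∀ i j : Fin d,
      HasDerivAt (fun t' => ∫ s in Set.Ioi (0 : ℝ),
          Real.exp (-s) * (B s t' x i j - (1 : Matrix (Fin d) (Fin d) ℝ) i j))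
        (∫ s in Set.Ioi (0 : ℝ),
          Real.exp (-s) * deriv (fun t' => B s t' x i j) t) t)
    -- (i) domination allowing differentiation under the integral sign in `x`
    (hswap_x : ∀ (t : ℝ), ∀ x ∈ Ω, ∀ i j : Fin d,
      DifferentiableAt ℝ (fun x' => ∫ s in Set.Ioi (0 : ℝ),
          Real.exp (-s) * (B s t x' i j - (1 : Matrix (Fin d) (Fin d) ℝ) i j)) x ∧
      ∀ k : Fin d,
        fderiv ℝ (fun x' => ∫ s in Set.Ioi (0 : ℝ),
            Real.exp (-s) * (B s t x' i j - (1 : Matrix (Fin d) (Fin d) ℝ) i j)) x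
          (Pi.single k 1)
        = ∫ s in Set.Ioi (0 : ℝ),
            Real.exp (-s) * fderiv ℝ (fun x' => B s t x' i j) x (Pi.single k 1))
    -- (ii) decay at infinity
    (hdecay : ∀ (t : ℝ), ∀ x ∈ Ω, ∀ i j : Fin d,
      Tendsto (fun s =>
          Real.exp (-s) * (B s t x i j - (1 : Matrix (Fin d) (Fin d) ℝ) i j))
        atTop (nhds 0)) :
    ∀ (t : ℝ), ∀ x ∈ Ω, ∀ i j : Fin d,
      (DifferentiableAt ℝ (fun t' => τ t' x i j) t ∧
        DifferentiableAt ℝ (fun x' => τ t x' i j) x) ∧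
      We * (deriv (fun t' => τ t' x i j) t
            + ∑ k : Fin d, u t x k *
                fderiv ℝ (fun x' => τ t x' i j) x (Pi.single k 1)
            - ((gradVF (u t) x)ᵀ * τ t x) i j
            - (τ t x * gradVF (u t) x) i j)
          + τ t x i j
        = 2 * ω *
            (((2 : ℝ)⁻¹ • (gradVF (u t) x + (gradVF (u t) x)ᵀ)) i j) :=
  upper_convected_maxwell_general d We ω hWe Ω u B hB hPDE hB0 τ hτ hint0 hint1 hint2 hint3 hswap_t
    hswap_x hdecay
end

section
/- Let 𝔚𝔢 > 0, ω ∈ ℝ, Ω ⊆ ℝᵈ open, and u : ℝ × Ω → ℝᵈ continuously differentiable. Suppose C : [0,∞) × ℝ × Ω → M_d(ℝ) is continuously differentiable, satisfies ∂_t C + (1/𝔚𝔢) ∂_s C + (u·∇)C = −C·(∇u)ᵀ − (∇u)·C pointwise and C(0,t,x) = 𝟙 for all (t,x). Define τ(t,x) = (ω/𝔚𝔢) ∫₀^∞ e^{−s}(𝟙 − C(s,t,x)) ds, and assume: (i) for each (t,x) the functions s ↦ e^{−s}(𝟙 − C(s,t,x)), s ↦ e^{−s}∂_t C(s,t,x),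 s ↦ e^{−s}∂_s C(s,t,x) and s ↦ e^{−s}∂_{x_k}C(s,t,x) (k = 1,…,d) are integrable on (0,∞), with domination allowing differentiation under the integral sign in t and x; (ii) e^{−s}(𝟙 − C(s,t,x)) → 0 as s → ∞ for each (t,x). Then τ is differentiable and satisfies the Lower Convected Maxwell equation 𝔚𝔢(∂_t τ + (u·∇)τ + τ·(∇u)ᵀ + (∇u)·τ) + τ = 2ω·Du pointwise, where Du = (∇u + (∇u)ᵀ)/2. -/
open Matrix MeasureTheory Filter

/-!
Multiplying the transport equation for `C` by the memory function `e^{-s}` and integrating over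
`s ∈ (0, ∞)` gives an identity between memory integrals. Integration by parts turns the
`s`-derivative term into `-∫ e^{-s} (𝟙 - C)`, the boundary terms vanishing because `C(0) = 𝟙` and
`e^{-s}(𝟙 - C) → 0`; on the right, `-C·(∇u)ᵀ - (∇u)·C = (𝟙 - C)·(∇u)ᵀ + (∇u)·(𝟙 - C) - 2 Du`
and `∫ e^{-s} = 1`. Differentiating under the integral sign, the resulting identity is the Lower
Convected Maxwell equation for `τ = (ω/𝔚𝔢) ∫ e^{-s} (𝟙 - C)`.
-/

open Real Set Topology

section MemoryIntegral

variable {n : Type*}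

def MemoryIntegrable (F : ℝ → Matrix n n ℝ) : Prop :=
  ∀ i j, IntegrableOn (fun s => exp (-s) * F s i j) (Ioi 0)

noncomputable def memoryIntegral (F : ℝ → Matrix n n ℝ) : Matrix n n ℝ :=
  of fun i j => ∫ s in Ioi 0, exp (-s) * F s i j

namespace MemoryIntegrable

variable {F G : ℝ → Matrix n n ℝ}

theorem const (A : Matrix n n ℝ) : MemoryIntegrable fun _ => A := fun i j =>
  (integrableOn_exp_neg_Ioi 0).mul_const (A i j)

theorem add (hF : MemoryIntegrable F) (hG : MemoryIntegrable G) :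
    MemoryIntegrable fun s => F s + G s := fun i j => by
  simp only [Matrix.add_apply, mul_add]
  exact (hF i j).add (hG i j)

theorem neg (hF : MemoryIntegrable F) : MemoryIntegrable fun s => -F s := fun i j => by
  simp only [Matrix.neg_apply, mul_neg]
  exact (hF i j).neg

theorem smul (a : ℝ) (hF : MemoryIntegrable F) : MemoryIntegrable fun s => a • F s :=
  fun i j => by
  simp only [Matrix.smul_apply, smul_eq_mul, mul_left_comm _ a]
  exact (hF i j).const_mul a

theorem sum {ι : Type*} (t : Finset ι) {F : ι → ℝ → Matrix n n ℝ}
    (hF : ∀ k, MemoryIntegrable (F k)) : MemoryIntegrable fun s => ∑ k ∈ t, F k s :=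
  fun i j => by
  simp only [Matrix.sum_apply, Finset.mul_sum]
  exact integrable_finsetSum t fun k _ => hF k i j

theorem mul_const [Fintype n] (hF : MemoryIntegrable F) (A : Matrix n n ℝ) :
    MemoryIntegrable fun s => F s * A := fun i j => by
  simp only [mul_apply, Finset.mul_sum, ← mul_assoc]
  exact integrable_finsetSum _ fun k _ => (hF i k).mul_const (A k j)

theorem const_mul [Fintype n] (hF : MemoryIntegrable F) (A : Matrix n n ℝ) :
    MemoryIntegrable fun s => A * F s := fun i j => by
  simp only [mul_apply, Finset.mul_sum, mul_left_comm (exp _)]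
  exact integrable_finsetSum _ fun k _ => (hF k j).const_mul (A i k)

end MemoryIntegrable

variable {F G : ℝ → Matrix n n ℝ}

theorem memoryIntegral_congr (h : EqOn F G (Ioi 0)) : memoryIntegral F = memoryIntegral G :=
  Matrix.ext fun i j => setIntegral_congr_fun measurableSet_Ioi fun s hs => by rw [h hs]

theorem memoryIntegral_const (A : Matrix n n ℝ) : memoryIntegral (fun _ => A) = A :=
  Matrix.ext fun i j => by
    simp only [memoryIntegral, of_apply, integral_mul_const, integral_exp_neg_Ioi_zero, one_mul]

theorem memoryIntegral_add (hF : MemoryIntegrable F) (hG : MemoryIntegrable G) :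
    memoryIntegral (fun s => F s + G s) = memoryIntegral F + memoryIntegral G :=
  Matrix.ext fun i j => by
    simp only [memoryIntegral, of_apply, Matrix.add_apply, mul_add]
    exact integral_add (hF i j) (hG i j)

theorem memoryIntegral_neg : memoryIntegral (fun s => -F s) = -memoryIntegral F :=
  Matrix.ext fun i j => by
    simp only [memoryIntegral, of_apply, Matrix.neg_apply, mul_neg, integral_neg]

theorem memoryIntegral_sub (hF : MemoryIntegrable F) (hG : MemoryIntegrable G) :
    memoryIntegral (fun s => F s - G s) = memoryIntegral F - memoryIntegral G :=
  Matrix.ext fun i j => by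
    simp only [memoryIntegral, of_apply, Matrix.sub_apply, mul_sub]
    exact integral_sub (hF i j) (hG i j)

theorem memoryIntegral_smul (a : ℝ) :
    memoryIntegral (fun s => a • F s) = a • memoryIntegral F :=
  Matrix.ext fun i j => by
    simp only [memoryIntegral, of_apply, Matrix.smul_apply, smul_eq_mul, mul_left_comm _ a,
      integral_const_mul]

theorem memoryIntegral_sum {ι : Type*} (t : Finset ι) {F : ι → ℝ → Matrix n n ℝ}
    (hF : ∀ k, MemoryIntegrable (F k)) :
    memoryIntegral (fun s => ∑ k ∈ t, F k s) = ∑ k ∈ t, memoryIntegral (F k) :=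
  Matrix.ext fun i j => by
    simp only [memoryIntegral, of_apply, Matrix.sum_apply, Finset.mul_sum]
    exact integral_finsetSum t fun k _ => hF k i j

theorem memoryIntegral_mul_const [Fintype n] (hF : MemoryIntegrable F) (A : Matrix n n ℝ) :
    memoryIntegral (fun s => F s * A) = memoryIntegral F * A :=
  Matrix.ext fun i j => by
    simp only [memoryIntegral, of_apply, mul_apply, Finset.mul_sum, ← mul_assoc]
    rw [integral_finsetSum _ fun k _ => (hF i k).mul_const (A k j)]
    simp only [integral_mul_const]

theorem memoryIntegral_const_mul [Fintype n] (hF : MemoryIntegrable F) (A : Matrix n n ℝ) :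
    memoryIntegral (fun s => A * F s) = A * memoryIntegral F :=
  Matrix.ext fun i j => by
    simp only [memoryIntegral, of_apply, mul_apply, Finset.mul_sum, mul_left_comm (exp _)]
    rw [integral_finsetSum _ fun k _ => (hF k j).const_mul (A i k)]
    simp only [integral_const_mul]

end MemoryIntegral

theorem ContDiffAt.differentiableAt_partial_fst {E F : Type*} [NormedAddCommGroup E]
    [NormedSpace ℝ E] [NormedAddCommGroup F] [NormedSpace ℝ F] {f : ℝ × E → F} {n : WithTop ℕ∞}
    {s : ℝ} {y : E} (hf : ContDiffAt ℝ n f (s, y)) (hn : n ≠ 0) :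
    DifferentiableAt ℝ (fun s' => f (s', y)) s :=
  (hf.differentiableAt hn).comp s (by fun_prop)

theorem integral_exp_neg_mul_deriv_Ioi {f f' : ℝ → ℝ} (hf : ∀ s ∈ Ici 0, HasDerivAt f (f' s) s)
    (hfi : IntegrableOn (fun s => exp (-s) * f s) (Ioi 0))
    (hf'i : IntegrableOn (fun s => exp (-s) * f' s) (Ioi 0))
    (hdecay : Tendsto (fun s => exp (-s) * f s) atTop (𝓝 0)) :
    ∫ s in Ioi 0, exp (-s) * f' s = (∫ s in Ioi 0, exp (-s) * f s) - f 0 := by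
  have hderiv : ∀ s ∈ Ici (0 : ℝ), HasDerivAt (fun s => exp (-s) * f s)
      (exp (-s) * f' s - exp (-s) * f s) s := fun s hs =>
    ((hasDerivAt_neg s).exp.mul (hf s hs)).congr_deriv (by ring)
  have hftc := integral_Ioi_of_hasDerivAt_of_tendsto' hderiv (hf'i.sub hfi) hdecay
  rw [integral_sub hf'i hfi, neg_zero, exp_zero, one_mul, zero_sub] at hftc
  linarith

theorem memoryIntegral_of_hasDerivAt {n : Type*} {F F' : ℝ → Matrix n n ℝ}
    (hF : ∀ s ∈ Ici 0, ∀ i j, HasDerivAt (fun s => F s i j) (F' s i j) s)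
    (hFi : MemoryIntegrable F) (hF'i : MemoryIntegrable F')
    (hdecay : ∀ i j, Tendsto (fun s => exp (-s) * F s i j) atTop (𝓝 0)) :
    memoryIntegral F' = memoryIntegral F - F 0 :=
  Matrix.ext fun i j => by
    simp only [memoryIntegral, of_apply, Matrix.sub_apply]
    exact integral_exp_neg_mul_deriv_Ioi (fun s hs => hF s hs i j) (hFi i j) (hF'i i j) (hdecay i j)

/-- At a fixed `(t, x)`, `c`, `ct`, `cs`, `cx k` stand for `C`, `∂_t C`, `∂_s C`, `∂_{x_k} C` as
functions of `s`, `a` for `1/𝔚𝔢`, `v` for `u` and `G` for `∇u`. -/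
theorem memoryIntegral_transport {n κ : Type*} [Fintype n] [DecidableEq n] [Fintype κ]
    {a : ℝ} {v : κ → ℝ} {G : Matrix n n ℝ} {c ct cs : ℝ → Matrix n n ℝ}
    {cx : κ → ℝ → Matrix n n ℝ}
    (hcs : ∀ s ∈ Ici 0, ∀ i j, HasDerivAt (fun s => c s i j) (cs s i j) s) (hc0 : c 0 = 1)
    (hpde : ∀ s ∈ Ioi 0, ct s + a • cs s + ∑ k, v k • cx k s = -(c s * Gᵀ) - G * c s)
    (hS : MemoryIntegrable fun s => 1 - c s) (hct : MemoryIntegrable ct)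
    (hcs' : MemoryIntegrable cs) (hcx : ∀ k, MemoryIntegrable (cx k))
    (hdecay : ∀ i j, Tendsto (fun s => exp (-s) * (1 - c s) i j) atTop (𝓝 0)) :
    memoryIntegral ct + ∑ k, v k • memoryIntegral (cx k) =
      a • memoryIntegral (fun s => 1 - c s) + memoryIntegral (fun s => 1 - c s) * Gᵀ
        + G * memoryIntegral (fun s => 1 - c s) - (Gᵀ + G) := by
  set T := memoryIntegral fun s => 1 - c s
  have hcs_eq : memoryIntegral cs = -T := by
    have h := memoryIntegral_of_hasDerivAt (F := fun s => 1 - c s) (F' := fun s => -cs s)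
      (fun s hs i j => (hcs s hs i j).const_sub _) hS hcs'.neg hdecay
    rwa [memoryIntegral_neg, hc0, sub_self, sub_zero, neg_eq_iff_eq_neg] at h
  have hlhs : memoryIntegral (fun s => ct s + a • cs s + ∑ k, v k • cx k s)
      = memoryIntegral ct + a • memoryIntegral cs + ∑ k, v k • memoryIntegral (cx k) := by
    have hcx' k := (hcx k).smul (v k)
    rw [memoryIntegral_add (hct.add (hcs'.smul a)) (.sum _ hcx'),
      memoryIntegral_add hct (hcs'.smul a), memoryIntegral_smul, memoryIntegral_sum _ hcx']
    simp only [memoryIntegral_smul]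
  have hrhs : memoryIntegral (fun s => -(c s * Gᵀ) - G * c s) = T * Gᵀ + G * T - (Gᵀ + G) := by
    have hsplit s : -(c s * Gᵀ) - G * c s = (1 - c s) * Gᵀ + G * (1 - c s) - (Gᵀ + G) := by
      noncomm_ring
    simp only [hsplit]
    rw [memoryIntegral_sub ((hS.mul_const _).add (hS.const_mul _)) (.const _),
      memoryIntegral_add (hS.mul_const _) (hS.const_mul _), memoryIntegral_mul_const hS,
      memoryIntegral_const_mul hS, memoryIntegral_const]
  have h := memoryIntegral_congr hpde
  rw [hlhs, hrhs, hcs_eq] at h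
  linear_combination (norm := module) h

theorem lower_convected_maxwell_general (d : ℕ) (We ω : ℝ) (hWe : 0 < We)
    (Ω : Set (Fin d → ℝ))
    (u : ℝ → (Fin d → ℝ) → (Fin d → ℝ))
    (C : ℝ → ℝ → (Fin d → ℝ) → Matrix (Fin d) (Fin d) ℝ)
    (hC : ∀ (s t : ℝ) (x : Fin d → ℝ), 0 ≤ s → x ∈ Ω → ∀ i j : Fin d,
      ContDiffAt ℝ 1
        (fun q : ℝ × ℝ × (Fin d → ℝ) => C q.1 q.2.1 q.2.2 i j) (s, t, x))
    (hPDE : ∀ (s t : ℝ) (x : Fin d → ℝ), 0 ≤ s → x ∈ Ω → ∀ i j : Fin d,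
      deriv (fun t' => C s t' x i j) t
          + (1 / We) * deriv (fun s' => C s' t x i j) s
          + ∑ k : Fin d, u t x k *
              fderiv ℝ (fun x' => C s t x' i j) x (Pi.single k 1)
        = (-(C s t x * (gradVF (u t) x)ᵀ) - gradVF (u t) x * C s t x) i j)
    (hC0 : ∀ (t : ℝ) (x : Fin d → ℝ), C 0 t x = 1)
    (τ : ℝ → (Fin d → ℝ) → Matrix (Fin d) (Fin d) ℝ)
    (hτ : ∀ (t : ℝ) (x : Fin d → ℝ) (i j : Fin d),
      τ t x i j = (ω / We) * ∫ s in Set.Ioi (0 : ℝ),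
        Real.exp (-s) * ((1 : Matrix (Fin d) (Fin d) ℝ) i j - C s t x i j))
    -- (i) integrability of the integrands
    (hint0 : ∀ (t : ℝ), ∀ x ∈ Ω, ∀ i j : Fin d, IntegrableOn
      (fun s => Real.exp (-s) * ((1 : Matrix (Fin d) (Fin d) ℝ) i j - C s t x i j))
      (Set.Ioi (0 : ℝ)))
    (hint1 : ∀ (t : ℝ), ∀ x ∈ Ω, ∀ i j : Fin d, IntegrableOn
      (fun s => Real.exp (-s) * deriv (fun t' => C s t' x i j) t) (Set.Ioi (0 : ℝ)))
    (hint2 : ∀ (t : ℝ), ∀ x ∈ Ω, ∀ i j : Fin d, IntegrableOn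
      (fun s => Real.exp (-s) * deriv (fun s' => C s' t x i j) s) (Set.Ioi (0 : ℝ)))
    (hint3 : ∀ (t : ℝ), ∀ x ∈ Ω, ∀ i j k : Fin d, IntegrableOn
      (fun s => Real.exp (-s) * fderiv ℝ (fun x' => C s t x' i j) x (Pi.single k 1))
      (Set.Ioi (0 : ℝ)))
    -- (i) domination allowing differentiation under the integral sign in `t`
    (hswap_t : ∀ (t : ℝ), ∀ x ∈ Ω, ∀ i j : Fin d,
      HasDerivAt (fun t' => ∫ s in Set.Ioi (0 : ℝ),
          Real.exp (-s) * ((1 : Matrix (Fin d) (Fin d) ℝ) i j - C s t' x i j))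
        (∫ s in Set.Ioi (0 : ℝ),
          Real.exp (-s) * -(deriv (fun t' => C s t' x i j) t)) t)
    -- (i) domination allowing differentiation under the integral sign in `x`
    (hswap_x : ∀ (t : ℝ), ∀ x ∈ Ω, ∀ i j : Fin d,
      DifferentiableAt ℝ (fun x' => ∫ s in Set.Ioi (0 : ℝ),
          Real.exp (-s) * ((1 : Matrix (Fin d) (Fin d) ℝ) i j - C s t x' i j)) x ∧
      ∀ k : Fin d,
        fderiv ℝ (fun x' => ∫ s in Set.Ioi (0 : ℝ),
            Real.exp (-s) * ((1 : Matrix (Fin d) (Fin d) ℝ) i j - C s t x' i j)) x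
          (Pi.single k 1)
        = ∫ s in Set.Ioi (0 : ℝ),
            Real.exp (-s) * -(fderiv ℝ (fun x' => C s t x' i j) x (Pi.single k 1)))
    -- (ii) decay at infinity
    (hdecay : ∀ (t : ℝ), ∀ x ∈ Ω, ∀ i j : Fin d,
      Tendsto (fun s =>
          Real.exp (-s) * ((1 : Matrix (Fin d) (Fin d) ℝ) i j - C s t x i j))
        atTop (nhds 0)) :
    ∀ (t : ℝ), ∀ x ∈ Ω, ∀ i j : Fin d,
      (DifferentiableAt ℝ (fun t' => τ t' x i j) t ∧
        DifferentiableAt ℝ (fun x' => τ t x' i j) x) ∧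
      We * (deriv (fun t' => τ t' x i j) t
            + ∑ k : Fin d, u t x k *
                fderiv ℝ (fun x' => τ t x' i j) x (Pi.single k 1)
            + (τ t x * (gradVF (u t) x)ᵀ) i j
            + (gradVF (u t) x * τ t x) i j)
          + τ t x i j
        = 2 * ω *
            (((2 : ℝ)⁻¹ • (gradVF (u t) x + (gradVF (u t) x)ᵀ)) i j) := by
  simp only [mul_neg, integral_neg] at hswap_t hswap_x
  intro t x hx i j
  set G := gradVF (u t) x
  let ct s : Matrix (Fin d) (Fin d) ℝ := of fun a b => deriv (fun t' => C s t' x a b) t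
  let cs s : Matrix (Fin d) (Fin d) ℝ := of fun a b => deriv (fun s' => C s' t x a b) s
  let cx k s : Matrix (Fin d) (Fin d) ℝ :=
    of fun a b => fderiv ℝ (fun x' => C s t x' a b) x (Pi.single k 1)
  have hcs : ∀ s ∈ Ici 0, ∀ a b, HasDerivAt (fun s' => C s' t x a b) (cs s a b) s :=
    fun s hs a b => ((hC s t x hs hx a b).differentiableAt_partial_fst one_ne_zero).hasDerivAt
  have hpde : ∀ s ∈ Ioi 0, ct s + (1 / We) • cs s + ∑ k, u t x k • cx k s
      = -(C s t x * Gᵀ) - G * C s t x := fun s hs => Matrix.ext fun a b => by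
    simp only [Matrix.add_apply, Matrix.smul_apply, Matrix.sum_apply, smul_eq_mul]
    exact hPDE s t x (le_of_lt hs) hx a b
  have key := congrFun₂ (memoryIntegral_transport hcs (hC0 t x) hpde (hint0 t x hx)
    (hint1 t x hx) (hint2 t x hx) (fun k a b => hint3 t x hx a b k) (hdecay t x hx)) i j
  have hτT : τ t x = (ω / We) • memoryIntegral fun s => 1 - C s t x :=
    Matrix.ext fun a b => hτ t x a b
  have hτ_t : HasDerivAt (fun t' => τ t' x i j) (ω / We * -memoryIntegral ct i j) t := by
    simp only [hτ]
    exact (hswap_t t x hx i j).const_mul _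
  obtain ⟨hdiff_x, hfderiv_x⟩ := hswap_x t x hx i j
  have hτ_x k : fderiv ℝ (fun x' => τ t x' i j) x (Pi.single k 1)
      = ω / We * -memoryIntegral (cx k) i j := by
    simp only [hτ, fderiv_const_mul hdiff_x, _root_.smul_apply, hfderiv_x k,
      smul_eq_mul]
    rfl
  refine ⟨⟨hτ_t.differentiableAt, by simpa only [hτ] using hdiff_x.const_mul (ω / We)⟩, ?_⟩
  have hτ_x_sum : ∑ k, u t x k * fderiv ℝ (fun x' => τ t x' i j) x (Pi.single k 1)
      = -(ω / We) * ∑ k, u t x k * memoryIntegral (cx k) i j := by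
    simp only [hτ_x, Finset.mul_sum]
    exact Finset.sum_congr rfl fun k _ => by ring
  rw [hτ_t.deriv, hτ_x_sum, hτT]
  simp only [Matrix.add_apply, Matrix.sub_apply, Matrix.smul_apply, Matrix.sum_apply,
    Matrix.smul_mul, Matrix.mul_smul, Matrix.transpose_apply, smul_eq_mul] at key ⊢
  field_simp at key ⊢
  linear_combination (-ω) * key

/-- if the Cauchy–Green tensor `C(s,t,x)` is `C¹`, satisfies the
transport equation `∂_t C + (1/𝔚𝔢)∂_s C + (u·∇)C = −C·(∇u)ᵀ − (∇u)·C` with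
`C(0,t,x) = 𝟙`, and the stress `τ(t,x) = (ω/𝔚𝔢)∫₀^∞ e^{−s}(𝟙 − C(s,t,x)) ds` is
defined with integrands that are integrable and admit differentiation under the
integral sign in `t` and `x`, and `e^{−s}(𝟙 − C) → 0` as `s → ∞`, then `τ` is
differentiable and satisfies the Lower Convected Maxwell equation
`𝔚𝔢(∂_t τ + (u·∇)τ + τ·(∇u)ᵀ + (∇u)·τ) + τ = 2ω·Du` with `Du = (∇u + (∇u)ᵀ)/2`. -/
theorem lower_convected_maxwell (d : ℕ) (We ω : ℝ) (hWe : 0 < We)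
    (Ω : Set (Fin d → ℝ)) (hΩ : IsOpen Ω)
    (u : ℝ → (Fin d → ℝ) → (Fin d → ℝ))
    (hu : ContDiff ℝ 1 (fun p : ℝ × (Fin d → ℝ) => u p.1 p.2))
    (C : ℝ → ℝ → (Fin d → ℝ) → Matrix (Fin d) (Fin d) ℝ)
    (hC : ∀ (s t : ℝ) (x : Fin d → ℝ), 0 ≤ s → x ∈ Ω → ∀ i j : Fin d,
      ContDiffAt ℝ 1
        (fun q : ℝ × ℝ × (Fin d → ℝ) => C q.1 q.2.1 q.2.2 i j) (s, t, x))
    (hPDE : ∀ (s t : ℝ) (x : Fin d → ℝ), 0 ≤ s → x ∈ Ω → ∀ i j : Fin d,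
      deriv (fun t' => C s t' x i j) t
          + (1 / We) * deriv (fun s' => C s' t x i j) s
          + ∑ k : Fin d, u t x k *
              fderiv ℝ (fun x' => C s t x' i j) x (Pi.single k 1)
        = (-(C s t x * (gradVF (u t) x)ᵀ) - gradVF (u t) x * C s t x) i j)
    (hC0 : ∀ (t : ℝ) (x : Fin d → ℝ), C 0 t x = 1)
    (τ : ℝ → (Fin d → ℝ) → Matrix (Fin d) (Fin d) ℝ)
    (hτ : ∀ (t : ℝ) (x : Fin d → ℝ) (i j : Fin d),
      τ t x i j = (ω / We) * ∫ s in Set.Ioi (0 : ℝ),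
        Real.exp (-s) * ((1 : Matrix (Fin d) (Fin d) ℝ) i j - C s t x i j))
    -- (i) integrability of the integrands
    (hint0 : ∀ (t : ℝ), ∀ x ∈ Ω, ∀ i j : Fin d, IntegrableOn
      (fun s => Real.exp (-s) * ((1 : Matrix (Fin d) (Fin d) ℝ) i j - C s t x i j))
      (Set.Ioi (0 : ℝ)))
    (hint1 : ∀ (t : ℝ), ∀ x ∈ Ω, ∀ i j : Fin d, IntegrableOn
      (fun s => Real.exp (-s) * deriv (fun t' => C s t' x i j) t) (Set.Ioi (0 : ℝ)))
    (hint2 : ∀ (t : ℝ), ∀ x ∈ Ω, ∀ i j : Fin d, IntegrableOn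
      (fun s => Real.exp (-s) * deriv (fun s' => C s' t x i j) s) (Set.Ioi (0 : ℝ)))
    (hint3 : ∀ (t : ℝ), ∀ x ∈ Ω, ∀ i j k : Fin d, IntegrableOn
      (fun s => Real.exp (-s) * fderiv ℝ (fun x' => C s t x' i j) x (Pi.single k 1))
      (Set.Ioi (0 : ℝ)))
    -- (i) domination allowing differentiation under the integral sign in `t`
    (hswap_t : ∀ (t : ℝ), ∀ x ∈ Ω, ∀ i j : Fin d,
      HasDerivAt (fun t' => ∫ s in Set.Ioi (0 : ℝ),
          Real.exp (-s) * ((1 : Matrix (Fin d) (Fin d) ℝ) i j - C s t' x i j))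
        (∫ s in Set.Ioi (0 : ℝ),
          Real.exp (-s) * -(deriv (fun t' => C s t' x i j) t)) t)
    -- (i) domination allowing differentiation under the integral sign in `x`
    (hswap_x : ∀ (t : ℝ), ∀ x ∈ Ω, ∀ i j : Fin d,
      DifferentiableAt ℝ (fun x' => ∫ s in Set.Ioi (0 : ℝ),
          Real.exp (-s) * ((1 : Matrix (Fin d) (Fin d) ℝ) i j - C s t x' i j)) x ∧
      ∀ k : Fin d,
        fderiv ℝ (fun x' => ∫ s in Set.Ioi (0 : ℝ),
            Real.exp (-s) * ((1 : Matrix (Fin d) (Fin d) ℝ) i j - C s t x' i j)) x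
          (Pi.single k 1)
        = ∫ s in Set.Ioi (0 : ℝ),
            Real.exp (-s) * -(fderiv ℝ (fun x' => C s t x' i j) x (Pi.single k 1)))
    -- (ii) decay at infinity
    (hdecay : ∀ (t : ℝ), ∀ x ∈ Ω, ∀ i j : Fin d,
      Tendsto (fun s =>
          Real.exp (-s) * ((1 : Matrix (Fin d) (Fin d) ℝ) i j - C s t x i j))
        atTop (nhds 0)) :
    ∀ (t : ℝ), ∀ x ∈ Ω, ∀ i j : Fin d,
      (DifferentiableAt ℝ (fun t' => τ t' x i j) t ∧
        DifferentiableAt ℝ (fun x' => τ t x' i j) x) ∧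
      We * (deriv (fun t' => τ t' x i j) t
            + ∑ k : Fin d, u t x k *
                fderiv ℝ (fun x' => τ t x' i j) x (Pi.single k 1)
            + (τ t x * (gradVF (u t) x)ᵀ) i j
            + (gradVF (u t) x * τ t x) i j)
          + τ t x i j
        = 2 * ω *
            (((2 : ℝ)⁻¹ • (gradVF (u t) x + (gradVF (u t) x)ᵀ)) i j) :=
  lower_convected_maxwell_general d We ω hWe Ω u C hC hPDE hC0 τ hτ hint0 hint1 hint2 hint3 hswap_t
    hswap_x hdecay
end
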